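/- Let A be a finite-dimensional Frobenius algebra over a field and let L ≤ A be a left ideal. Setting I = Ann_r(L) = {a ∈ A : La = 0}, one has Ann_ℓ(I) = {a ∈ A : aI = 0} = L. -/
import Mathlib

open Module

section Aux

variable {K V : Type*} [Field K] [AddCommGroup V] [Module K V] [FiniteDimensional K V]

lemma aux_finrank_dualAnnihilator (W : Subspace K V) :
    finrank K W + finrank K W.dualAnnihilator = finrank K V := by
  have h1 : finrank K W.dualAnnihilator = finrank K (V ⧸ W) :=
    (LinearEquiv.finrank_eq W.quotEquivAnnihilator).symm
  rw [h1, add_comm, Submodule.finrank_quotient_add_finrank]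

lemma aux_finrank_comap (f : V →ₗ[K] Module.Dual K V) (hf : Function.Injective f)
    (S : Subspace K (Module.Dual K V)) :
    finrank K (S.comap f) = finrank K S := by
  have hdim : finrank K V = finrank K (Module.Dual K V) := Subspace.dual_finrank_eq.symm
  let e : V ≃ₗ[K] Module.Dual K V := f.linearEquivOfInjective hf hdim
  have hef : (e : V →ₗ[K] Module.Dual K V) = f := rfl
  have key : S.comap f = S.map (e.symm : Module.Dual K V →ₗ[K] V) := by
    rw [← hef]
    exact Submodule.comap_equiv_eq_map_symm e S
  rw [key]
  exact LinearEquiv.finrank_map_eq e.symm S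

end Aux

theorem stmt19 {K A : Type*} [Field K] [Ring A] [Algebra K A] [FiniteDimensional K A]
    (B : A →ₗ[K] A →ₗ[K] K)
    (hassoc : ∀ a b c : A, B (a * b) c = B a (b * c))
    (hndl : ∀ a : A, (∀ b : A, B a b = 0) → a = 0)
    (hndr : ∀ b : A, (∀ a : A, B a b = 0) → b = 0)
    (L : Ideal A) :
    {a : A | ∀ b ∈ {c : A | ∀ x ∈ L, x * c = 0}, a * b = 0} = (L : Set A) := by
  classical
  -- B and B.flip are injective
  have hBinj : Function.Injective B := by
    rw [← LinearMap.ker_eq_bot, LinearMap.ker_eq_bot']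
    intro a ha
    exact hndl a fun b => by rw [ha]; simp
  have hBflipinj : Function.Injective B.flip := by
    rw [← LinearMap.ker_eq_bot, LinearMap.ker_eq_bot']
    intro a ha
    exact hndr a fun b => by
      have := LinearMap.congr_fun ha b
      simpa using this
  -- the K-subspace underlying L
  set W : Subspace K A := L.restrictScalars K with hW
  -- right orthogonal of W
  set R : Subspace K A := W.dualAnnihilator.comap B.flip with hR
  have hmemR : ∀ a : A, a ∈ R ↔ ∀ x ∈ L, B x a = 0 := by
    intro a
    simp [hR, Submodule.mem_dualAnnihilator]
    rfl
  -- left orthogonal of R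
  set Lo : Subspace K A := R.dualAnnihilator.comap B with hLo
  have hmemLo : ∀ a : A, a ∈ Lo ↔ ∀ y ∈ R, B a y = 0 := by
    intro a
    simp [hLo, Submodule.mem_dualAnnihilator]
  -- dimension count
  have h1 : finrank K W + finrank K W.dualAnnihilator = finrank K A :=
    aux_finrank_dualAnnihilator W
  have h2 : finrank K R = finrank K W.dualAnnihilator :=
    aux_finrank_comap B.flip hBflipinj _
  have h3 : finrank K R + finrank K R.dualAnnihilator = finrank K A :=
    aux_finrank_dualAnnihilator R
  have h4 : finrank K Lo = finrank K R.dualAnnihilator :=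
    aux_finrank_comap B hBinj _
  have hdim : finrank K Lo = finrank K W := by omega
  -- W ≤ Lo
  have hle : W ≤ Lo := by
    intro x hx
    rw [hmemLo]
    intro y hy
    exact (hmemR y).1 hy x hx
  have hWLo : W = Lo := Submodule.eq_of_le_of_finrank_le hle (le_of_eq hdim)
  -- the annihilator set equals R
  have hAnnR : {c : A | ∀ x ∈ L, x * c = 0} = (R : Set A) := by
    ext c
    constructor
    · intro hc
      rw [Set.mem_setOf_eq] at hc
      rw [SetLike.mem_coe, hmemR]
      intro x hx
      have : x * c = 0 := hc x hx
      calc B x c = B x (c * 1) := by rw [mul_one]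
        _ = B (x * c) 1 := (hassoc x c 1).symm
        _ = 0 := by rw [this]; simp
    · intro hc x hx
      rw [SetLike.mem_coe, hmemR] at hc
      apply hndr
      intro b
      calc B b (x * c) = B (b * x) c := (hassoc b x c).symm
        _ = 0 := hc (b * x) (L.mul_mem_left b hx)
  -- main set equality
  ext a
  constructor
  · intro ha
    rw [Set.mem_setOf_eq] at ha
    have haLo : a ∈ Lo := by
      rw [hmemLo]
      intro y hy
      have hy' : y ∈ {c : A | ∀ x ∈ L, x * c = 0} := by
        rw [hAnnR]; exact hy
      have hay : a * y = 0 := ha y hy'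
      calc B a y = B a (y * 1) := by rw [mul_one]
        _ = B (a * y) 1 := (hassoc a y 1).symm
        _ = 0 := by rw [hay]; simp
    rw [← hWLo] at haLo
    exact haLo
  · intro ha b hb
    rw [Set.mem_setOf_eq] at hb
    exact hb a ha
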